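/- arXiv:1908.08732 — 2 statements merged into one kernel-verified Lean document; each statement's English description precedes it below -/
import Mathlib

section
/- Let D₁, D₂ be nullspace consistent tensor product SBP operators in two dimensions. If a discrete vector field (u₁,u₂) satisfies D₁u₂ = D₂u₁, u₁ ⊥_M osc₁, and u₂ ⊥_M osc₂, then there exists a discrete scalar potential φ with D₁φ = u₁ and D₂φ = u₂. -/
/-!
Identify a grid function `u` with the matrix `U i j = u (i, j)`; then `D₁` and `D₂` act as
`U ↦ Dx * U` and `U ↦ U * Dyᵀ`, and the orthogonality conditions read `aᵀ U₁ (My 𝟙) = 0`,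
`(Mx 𝟙)ᵀ U₂ b = 0` with `a = Mx oscx`, `b = My oscy` spanning `ker Dxᵀ`, `ker Dyᵀ`. The range of
`Dx` is then `a^⊥`, and that of `Dy` is `b^⊥`.

Curl-freeness gives `Dy (U₁ᵀ a) = U₂ᵀ (Dxᵀ a) = 0`, so `U₁ᵀ a` is constant, and the first
orthogonality condition makes the constant vanish: every column of `U₁` is orthogonal to `a`,
so `U₁ = Dx Ψ`. The defect `Ψ Dyᵀ - U₂` is annihilated by `Dx`, hence equals `𝟙 cᵀ`; the second
orthogonality condition forces `c ⊥ b`, so `c = Dy g`, and `Ψ - 𝟙 gᵀ` is the potential.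
-/

open Matrix Kronecker Function

theorem eq_zero_of_mem_span_singleton_of_dotProduct_eq_zero {n K : Type*} [Fintype n] [Field K]
    {v w q : n → K} (hw : w ∈ Submodule.span K {v}) (hwq : w ⬝ᵥ q = 0) (hvq : v ⬝ᵥ q ≠ 0) :
    w = 0 := by
  obtain ⟨c, rfl⟩ := Submodule.mem_span_singleton.mp hw
  rw [smul_dotProduct, smul_eq_mul, mul_eq_zero] at hwq
  rw [hwq.resolve_right hvq, zero_smul]

namespace Matrix

variable {l m n p R : Type*}

theorem mulVec_eq_zero_of_ker_eq_span [Fintype n] [CommSemiring R] {A : Matrix m n R}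
    {v : n → R} (h : LinearMap.ker A.mulVecLin = Submodule.span R {v}) : A *ᵥ v = 0 :=
  (h ▸ Submodule.mem_span_singleton_self v : v ∈ LinearMap.ker A.mulVecLin)

theorem ker_mulVecLin_conj_eq_comap [Fintype n] [DecidableEq n] [CommRing R]
    {M : Matrix n n R} (hM : IsUnit M) (A : Matrix n n R) :
    LinearMap.ker (M⁻¹ * A * M).mulVecLin = (LinearMap.ker A.mulVecLin).comap M.mulVecLin := by
  have hinv : LinearMap.ker M⁻¹.mulVecLin = ⊥ :=
    LinearMap.ker_eq_bot_of_injective (mulVec_injective_of_isUnit (isUnit_nonsing_inv_iff.mpr hM))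
  rw [mulVecLin_mul, mulVecLin_mul, LinearMap.ker_comp, LinearMap.ker_comp, hinv]
  rfl

theorem ker_mulVecLin_eq_span_mulVec_of_conj [Fintype n] [DecidableEq n] [CommRing R]
    {M A : Matrix n n R} (hM : IsUnit M) {o : n → R}
    (h : LinearMap.ker (M⁻¹ * A * M).mulVecLin = Submodule.span R {o}) :
    LinearMap.ker A.mulVecLin = Submodule.span R {M *ᵥ o} := by
  rw [← Submodule.map_comap_eq_of_surjective (f := M.mulVecLin)
    (mulVec_surjective_iff_isUnit.mpr hM) (LinearMap.ker A.mulVecLin),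
    ← ker_mulVecLin_conj_eq_comap hM, h, Submodule.map_span, Set.image_singleton, mulVecLin_apply]

theorem mem_range_mulVecLin_iff [Fintype m] [Fintype n] [DecidableEq m] [DecidableEq n]
    (A : Matrix m n ℝ) (v : m → ℝ) :
    v ∈ LinearMap.range A.mulVecLin ↔ ∀ w, Aᵀ *ᵥ w = 0 → w ⬝ᵥ v = 0 := by
  have hrange : LinearMap.range (toEuclideanLin A) = (LinearMap.ker (toEuclideanLin Aᵀ))ᗮ := by
    rw [LinearMap.orthogonal_ker, ← toEuclideanLin_conjTranspose_eq_adjoint,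
      conjTranspose_eq_transpose_of_trivial, transpose_transpose]
  have hmem : v ∈ LinearMap.range A.mulVecLin ↔
      WithLp.toLp 2 v ∈ LinearMap.range (toEuclideanLin A) := by
    constructor
    · rintro ⟨x, rfl⟩
      exact ⟨WithLp.toLp 2 x, rfl⟩
    · rintro ⟨x, hx⟩
      exact ⟨x.ofLp, congrArg WithLp.ofLp hx⟩
  rw [hmem, hrange, Submodule.mem_orthogonal]
  constructor
  · intro h w hw
    simpa [EuclideanSpace.inner_eq_star_dotProduct, dotProduct_comm] using
      h (WithLp.toLp 2 w) (by simpa [toLpLin_toLp] using hw)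
  · intro h w hw
    simpa [EuclideanSpace.inner_eq_star_dotProduct, dotProduct_comm] using
      h w.ofLp (by simpa using congrArg WithLp.ofLp hw)

theorem mem_range_mulVecLin_iff_dotProduct_eq_zero [Fintype m] [Fintype n] [DecidableEq m]
    [DecidableEq n] {A : Matrix m n ℝ} {a : m → ℝ}
    (ha : LinearMap.ker Aᵀ.mulVecLin = Submodule.span ℝ {a}) (v : m → ℝ) :
    v ∈ LinearMap.range A.mulVecLin ↔ a ⬝ᵥ v = 0 := by
  rw [mem_range_mulVecLin_iff]
  refine ⟨fun h => h a (mulVec_eq_zero_of_ker_eq_span ha), fun h w hw => ?_⟩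
  obtain ⟨c, rfl⟩ := Submodule.mem_span_singleton.mp (ha ▸ hw : w ∈ Submodule.span ℝ {a})
  rw [smul_dotProduct, h, smul_zero]

theorem exists_mul_eq_of_vecMul_eq_zero [Fintype m] [Fintype n] [DecidableEq m] [DecidableEq n]
    {A : Matrix m n ℝ} {a : m → ℝ} (ha : LinearMap.ker Aᵀ.mulVecLin = Submodule.span ℝ {a})
    {X : Matrix m p ℝ} (hX : a ᵥ* X = 0) :
    ∃ Y : Matrix n p ℝ, A * Y = X := by
  have hcol : ∀ j, ∃ y, A *ᵥ y = Xᵀ j := fun j =>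
    (mem_range_mulVecLin_iff_dotProduct_eq_zero ha (Xᵀ j)).mpr (congrFun hX j)
  choose y hy using hcol
  exact ⟨(of y)ᵀ, ext fun i j => congrFun (hy j) i⟩

theorem exists_eq_vecMulVec_of_mul_eq_zero [Fintype m] [CommSemiring R] {A : Matrix l m R}
    {v : m → R} (hA : LinearMap.ker A.mulVecLin = Submodule.span R {v}) {E : Matrix m n R}
    (hE : A * E = 0) :
    ∃ c : n → R, E = vecMulVec v c := by
  have hcol : ∀ j, ∃ c : R, c • v = Eᵀ j := fun j =>
    Submodule.mem_span_singleton.mp (hA ▸ funext fun i => congrFun (congrFun hE i) j)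
  choose c hc using hcol
  refine ⟨c, ext fun i j => ?_⟩
  simpa [vecMulVec_apply, mul_comm] using (congrFun (hc j) i).symm

theorem kronecker_mulVec_uncurry [Fintype m] [Fintype n] [CommSemiring R] (A : Matrix l m R)
    (B : Matrix p n R) (U : Matrix m n R) :
    (A ⊗ₖ B) *ᵥ uncurry U = uncurry (A * U * Bᵀ) := by
  -- `vec` stacks columns, so `uncurry U` is `vec Uᵀ` by definition
  calc (A ⊗ₖ B) *ᵥ vec Uᵀ = vec (B * Uᵀ * Aᵀ) := kronecker_mulVec_vec B Uᵀ A
    _ = vec (A * U * Bᵀ)ᵀ := by simp only [transpose_mul, transpose_transpose, Matrix.mul_assoc]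

theorem uncurry_dotProduct_uncurry_vecMulVec [Fintype m] [Fintype n] [CommSemiring R]
    (U : Matrix m n R) (x : m → R) (y : n → R) :
    uncurry U ⬝ᵥ uncurry (vecMulVec x y) = x ⬝ᵥ U *ᵥ y := by
  simp only [dotProduct, mulVec, Fintype.sum_prod_type, Finset.mul_sum]
  exact Finset.sum_congr rfl fun i _ => Finset.sum_congr rfl fun j _ =>
    show U i j * (x i * y j) = _ by ring

theorem uncurry_dotProduct_kronecker_mulVec_vecMulVec [Fintype m] [Fintype n] [CommSemiring R]
    (U : Matrix m n R) (A : Matrix m m R) (B : Matrix n n R) (x : m → R) (y : n → R) :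
    uncurry U ⬝ᵥ (A ⊗ₖ B) *ᵥ uncurry (vecMulVec x y) =
      (A *ᵥ x) ⬝ᵥ U *ᵥ (B *ᵥ y) := by
  rw [kronecker_mulVec_uncurry, mul_vecMulVec, vecMulVec_mul, vecMul_transpose,
    uncurry_dotProduct_uncurry_vecMulVec]

theorem PosDef.one_dotProduct_mulVec_one_pos [Fintype n] [Nonempty n] {M : Matrix n n ℝ}
    (hM : M.PosDef) : 0 < 1 ⬝ᵥ M *ᵥ 1 := by
  simpa using hM.dotProduct_mulVec_pos (one_ne_zero (α := n → ℝ))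

end Matrix

theorem exists_mul_eq_and_mul_transpose_eq {m n : Type*} [Fintype m] [Fintype n]
    [DecidableEq m] [DecidableEq n] {Dx : Matrix m m ℝ} {Dy : Matrix n n ℝ}
    (hDx : LinearMap.ker Dx.mulVecLin = Submodule.span ℝ {1})
    (hDy : LinearMap.ker Dy.mulVecLin = Submodule.span ℝ {1})
    {a : m → ℝ} {b : n → ℝ} (ha : LinearMap.ker Dxᵀ.mulVecLin = Submodule.span ℝ {a})
    (hb : LinearMap.ker Dyᵀ.mulVecLin = Submodule.span ℝ {b})
    {p : m → ℝ} {q : n → ℝ} (hp : 1 ⬝ᵥ p ≠ 0) (hq : 1 ⬝ᵥ q ≠ 0)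
    {U₁ U₂ : Matrix m n ℝ} (hcurl : Dx * U₂ = U₁ * Dyᵀ)
    (h₁ : a ⬝ᵥ U₁ *ᵥ q = 0) (h₂ : p ⬝ᵥ U₂ *ᵥ b = 0) :
    ∃ Φ : Matrix m n ℝ, Dx * Φ = U₁ ∧ Φ * Dyᵀ = U₂ := by
  have haU₁ : a ᵥ* U₁ = 0 := by
    have hker : Dy *ᵥ (a ᵥ* U₁) = 0 := by
      rw [← vecMul_transpose, vecMul_vecMul, ← hcurl, ← vecMul_vecMul, ← mulVec_transpose Dx,
        mulVec_eq_zero_of_ker_eq_span ha, zero_vecMul]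
    exact eq_zero_of_mem_span_singleton_of_dotProduct_eq_zero (hDy ▸ hker)
      (by rwa [← dotProduct_mulVec]) hq
  obtain ⟨Ψ, hΨ⟩ := exists_mul_eq_of_vecMul_eq_zero ha haU₁
  obtain ⟨c, hc⟩ : ∃ c, Ψ * Dyᵀ - U₂ = vecMulVec 1 c :=
    exists_eq_vecMulVec_of_mul_eq_zero hDx
      (by rw [Matrix.mul_sub, ← Matrix.mul_assoc, hΨ, hcurl, sub_self])
  have hcb : c ⬝ᵥ b = 0 := by
    have hU₂ : U₂ = Ψ * Dyᵀ - vecMulVec 1 c := by rw [← hc, sub_sub_cancel]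
    rw [hU₂, sub_mulVec, ← mulVec_mulVec, mulVec_eq_zero_of_ker_eq_span hb, mulVec_zero,
      vecMulVec_mulVec, zero_sub, dotProduct_neg, op_smul_eq_smul, dotProduct_smul, smul_eq_mul,
      dotProduct_comm p, neg_eq_zero, mul_eq_zero] at h₂
    exact h₂.resolve_right hp
  obtain ⟨g, hg⟩ := (mem_range_mulVecLin_iff_dotProduct_eq_zero hb c).mpr
    (by rwa [dotProduct_comm])
  refine ⟨Ψ - vecMulVec 1 g, ?_, ?_⟩
  · rw [Matrix.mul_sub, hΨ, mul_vecMulVec, mulVec_eq_zero_of_ker_eq_span hDx, zero_vecMulVec,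
      sub_zero]
  · rw [Matrix.sub_mul, vecMulVec_mul, vecMul_transpose, ← mulVecLin_apply, hg, ← hc,
      sub_sub_cancel]

theorem exists_discrete_scalar_potential_2D_general (N₁ N₂ : ℕ)
    (Dx Mx : Matrix (Fin N₁) (Fin N₁) ℝ) (Dy My : Matrix (Fin N₂) (Fin N₂) ℝ)
    (hMx : Mx.PosDef) (hMy : My.PosDef)
    (hDx : LinearMap.ker Dx.mulVecLin = Submodule.span ℝ {(fun _ => 1 : Fin N₁ → ℝ)})
    (hDy : LinearMap.ker Dy.mulVecLin = Submodule.span ℝ {(fun _ => 1 : Fin N₂ → ℝ)})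
    (oscx : Fin N₁ → ℝ) (oscy : Fin N₂ → ℝ)
    (hoscx : LinearMap.ker (Mx⁻¹ * Dxᵀ * Mx).mulVecLin = Submodule.span ℝ {oscx})
    (hoscy : LinearMap.ker (My⁻¹ * Dyᵀ * My).mulVecLin = Submodule.span ℝ {oscy})
    (D₁ D₂ : Matrix (Fin N₁ × Fin N₂) (Fin N₁ × Fin N₂) ℝ)
    (hD₁ : D₁ = Dx ⊗ₖ (1 : Matrix (Fin N₂) (Fin N₂) ℝ))
    (hD₂ : D₂ = (1 : Matrix (Fin N₁) (Fin N₁) ℝ) ⊗ₖ Dy)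
    (osc₁ osc₂ : Fin N₁ × Fin N₂ → ℝ)
    (hosc₁ : osc₁ = fun p => oscx p.1) (hosc₂ : osc₂ = fun p => oscy p.2)
    (u₁ u₂ : Fin N₁ × Fin N₂ → ℝ)
    (hcurlfree : D₁.mulVec u₂ = D₂.mulVec u₁)
    (horth₁ : u₁ ⬝ᵥ (Mx ⊗ₖ My).mulVec osc₁ = 0)
    (horth₂ : u₂ ⬝ᵥ (Mx ⊗ₖ My).mulVec osc₂ = 0) :
    ∃ φ : Fin N₁ × Fin N₂ → ℝ, D₁.mulVec φ = u₁ ∧ D₂.mulVec φ = u₂ := by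
  subst hD₁ hD₂
  rcases isEmpty_or_nonempty (Fin N₁ × Fin N₂) with hempty | ⟨⟨i₀, j₀⟩⟩
  · exact ⟨0, Subsingleton.elim _ _, Subsingleton.elim _ _⟩
  have := Nonempty.intro i₀
  have := Nonempty.intro j₀
  obtain ⟨U₁, rfl⟩ : ∃ U : Matrix _ _ ℝ, uncurry U = u₁ := ⟨_, uncurry_curry u₁⟩
  obtain ⟨U₂, rfl⟩ : ∃ U : Matrix _ _ ℝ, uncurry U = u₂ := ⟨_, uncurry_curry u₂⟩
  replace hosc₁ : osc₁ = uncurry (vecMulVec oscx 1) := by rw [vecMulVec_one, hosc₁]; rfl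
  replace hosc₂ : osc₂ = uncurry (vecMulVec 1 oscy) := by rw [one_vecMulVec, hosc₂]; rfl
  simp only [kronecker_mulVec_uncurry, transpose_one, Matrix.mul_one, Matrix.one_mul] at hcurlfree
  rw [hosc₁, uncurry_dotProduct_kronecker_mulVec_vecMulVec] at horth₁
  rw [hosc₂, uncurry_dotProduct_kronecker_mulVec_vecMulVec] at horth₂
  obtain ⟨Φ, hΦ₁, hΦ₂⟩ := exists_mul_eq_and_mul_transpose_eq hDx hDy
    (ker_mulVecLin_eq_span_mulVec_of_conj hMx.isUnit hoscx)
    (ker_mulVecLin_eq_span_mulVec_of_conj hMy.isUnit hoscy)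
    hMx.one_dotProduct_mulVec_one_pos.ne' hMy.one_dotProduct_mulVec_one_pos.ne'
    (uncurry_injective hcurlfree) horth₁ horth₂
  refine ⟨uncurry Φ, ?_, ?_⟩ <;>
    simp only [kronecker_mulVec_uncurry, transpose_one, Matrix.mul_one, Matrix.one_mul, hΦ₁, hΦ₂]

/-- Let `D₁ = D_x ⊗ I_y`, `D₂ = I_x ⊗ D_y` be nullspace consistent tensor product SBP operators
with SPD mass matrix `M = M_x ⊗ M_y`. If a discrete vector field `(u₁, u₂)` satisfies
`D₁ u₂ = D₂ u₁`, `u₁ ⊥_M osc₁`, and `u₂ ⊥_M osc₂`, then there exists a discrete scalar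
potential `φ` with `D₁ φ = u₁` and `D₂ φ = u₂`. -/
theorem exists_discrete_scalar_potential_2D (N₁ N₂ : ℕ)
    (Dx Mx : Matrix (Fin N₁) (Fin N₁) ℝ) (Dy My : Matrix (Fin N₂) (Fin N₂) ℝ)
    (hMx : Mx.PosDef) (hMxsym : Mx.IsSymm) (hMy : My.PosDef) (hMysym : My.IsSymm)
    (hDx : LinearMap.ker Dx.mulVecLin = Submodule.span ℝ {(fun _ => 1 : Fin N₁ → ℝ)})
    (hDy : LinearMap.ker Dy.mulVecLin = Submodule.span ℝ {(fun _ => 1 : Fin N₂ → ℝ)})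
    (oscx : Fin N₁ → ℝ) (oscy : Fin N₂ → ℝ)
    (hoscx : LinearMap.ker (Mx⁻¹ * Dxᵀ * Mx).mulVecLin = Submodule.span ℝ {oscx})
    (hoscy : LinearMap.ker (My⁻¹ * Dyᵀ * My).mulVecLin = Submodule.span ℝ {oscy})
    (D₁ D₂ : Matrix (Fin N₁ × Fin N₂) (Fin N₁ × Fin N₂) ℝ)
    (hD₁ : D₁ = Dx ⊗ₖ (1 : Matrix (Fin N₂) (Fin N₂) ℝ))
    (hD₂ : D₂ = (1 : Matrix (Fin N₁) (Fin N₁) ℝ) ⊗ₖ Dy)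
    (osc₁ osc₂ : Fin N₁ × Fin N₂ → ℝ)
    (hosc₁ : osc₁ = fun p => oscx p.1) (hosc₂ : osc₂ = fun p => oscy p.2)
    (u₁ u₂ : Fin N₁ × Fin N₂ → ℝ)
    (hcurlfree : D₁.mulVec u₂ = D₂.mulVec u₁)
    (horth₁ : u₁ ⬝ᵥ (Mx ⊗ₖ My).mulVec osc₁ = 0)
    (horth₂ : u₂ ⬝ᵥ (Mx ⊗ₖ My).mulVec osc₂ = 0) :
    ∃ φ : Fin N₁ × Fin N₂ → ℝ, D₁.mulVec φ = u₁ ∧ D₂.mulVec φ = u₂ :=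
  exists_discrete_scalar_potential_2D_general N₁ N₂ Dx Mx Dy My hMx hMy hDx hDy oscx oscy hoscx
    hoscy D₁ D₂ hD₁ hD₂ osc₁ osc₂ hosc₁ hosc₂ u₁ u₂ hcurlfree horth₁ horth₂
end

section
/- For nullspace consistent tensor product SBP operators in two dimensions, dim(ker curl) = dim(im grad) + 2. -/
/-! The range of `curl` is `range D₁ ⊔ range D₂`, whose codimension is the dimension of
`ker D₁ᵀ ⊓ ker D₂ᵀ` (rank of a matrix equals rank of its transpose). For Kronecker products,
`ker (A ⊗ I) ⊓ ker (I ⊗ B) = ker A ⊗ ker B`; as `Dx`, `Dy` and their transposes have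
one-dimensional kernels, both `ker grad` and `ker D₁ᵀ ⊓ ker D₂ᵀ` are one-dimensional.
Rank–nullity then gives, with `N = N₁ N₂`, `dim ker curl = 2N - (N - 1) = dim im grad + 2`. -/

open Matrix Kronecker Module

theorem Submodule.exists_eq_span_singleton_of_finrank_eq_one {K V : Type*} [Field K]
    [AddCommGroup V] [Module K V] {S : Submodule K V} (h : finrank K S = 1) :
    ∃ v ≠ 0, S = K ∙ v := by
  obtain ⟨⟨v, hv⟩, hv0, -⟩ := finrank_eq_one_iff'.mp h
  have hv0 : v ≠ 0 := fun hv' => hv0 (by simp [hv'])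
  exact ⟨v, hv0, eq_span_singleton_of_mem_of_finrank_eq_one h hv hv0⟩

theorem LinearMap.range_comp_snd_sub_comp_fst {R M N P : Type*} [Ring R] [AddCommGroup M]
    [AddCommGroup N] [AddCommGroup P] [Module R M] [Module R N] [Module R P]
    (f : N →ₗ[R] P) (g : M →ₗ[R] P) :
    range (f ∘ₗ snd R M N - g ∘ₗ fst R M N) = range f ⊔ range g := by
  have h : f ∘ₗ snd R M N - g ∘ₗ fst R M N = (-g).coprod f := by
    ext <;> simp
  rw [h, range_coprod, range_neg, sup_comm]

namespace Matrix

variable {R K : Type*} {l m n k : Type*} [Fintype m] [Fintype n]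

theorem kronecker_one_mulVec_apply [Semiring R] [DecidableEq n] (A : Matrix l m R)
    (u : m × n → R) (i : l) (j : n) :
    ((A ⊗ₖ (1 : Matrix n n R)) *ᵥ u) (i, j) = (A *ᵥ fun i' => u (i', j)) i := by
  simp [mulVec, dotProduct, Fintype.sum_prod_type, one_apply]

theorem one_kronecker_mulVec_apply [Semiring R] [DecidableEq m] (B : Matrix k n R)
    (u : m × n → R) (i : m) (j : k) :
    (((1 : Matrix m m R) ⊗ₖ B) *ᵥ u) (i, j) = (B *ᵥ fun j' => u (i, j')) j := by
  simp [mulVec, dotProduct, Fintype.sum_prod_type, one_apply]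

theorem mem_ker_kronecker_one_iff [CommSemiring R] [DecidableEq n] (A : Matrix l m R)
    (u : m × n → R) :
    u ∈ LinearMap.ker (A ⊗ₖ (1 : Matrix n n R)).mulVecLin ↔
      ∀ j, (fun i => u (i, j)) ∈ LinearMap.ker A.mulVecLin := by
  simp only [LinearMap.mem_ker, mulVecLin_apply, funext_iff, Prod.forall,
    kronecker_one_mulVec_apply, Pi.zero_apply]
  exact forall_comm

theorem mem_ker_one_kronecker_iff [CommSemiring R] [DecidableEq m] (B : Matrix k n R)
    (u : m × n → R) :
    u ∈ LinearMap.ker ((1 : Matrix m m R) ⊗ₖ B).mulVecLin ↔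
      ∀ i, (fun j => u (i, j)) ∈ LinearMap.ker B.mulVecLin := by
  simp only [LinearMap.mem_ker, mulVecLin_apply, funext_iff, Prod.forall,
    one_kronecker_mulVec_apply, Pi.zero_apply]

theorem ker_kronecker_one_inf_ker_one_kronecker [Field K] [DecidableEq m] [DecidableEq n]
    {A : Matrix l m K} {B : Matrix k n K} {a : m → K} {b : n → K}
    (hA : LinearMap.ker A.mulVecLin = K ∙ a) (hB : LinearMap.ker B.mulVecLin = K ∙ b) :
    LinearMap.ker (A ⊗ₖ (1 : Matrix n n K)).mulVecLin ⊓
        LinearMap.ker ((1 : Matrix m m K) ⊗ₖ B).mulVecLin =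
      K ∙ fun p => a p.1 * b p.2 := by
  apply le_antisymm
  · rintro u ⟨hu₁, hu₂⟩
    simp only [SetLike.mem_coe, mem_ker_kronecker_one_iff, mem_ker_one_kronecker_iff, hA, hB,
      Submodule.mem_span_singleton] at hu₁ hu₂
    choose c hc using hu₁
    choose d hd using hu₂
    have hu : ∀ i j, u (i, j) = c j * a i := fun i j => (congrFun (hc j) i).symm
    have hu' : ∀ i j, u (i, j) = d i * b j := fun i j => (congrFun (hd i) j).symm
    rw [Submodule.mem_span_singleton]
    by_cases ha : a = 0
    · refine ⟨0, funext fun ⟨i, j⟩ => ?_⟩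
      simp [hu, ha]
    obtain ⟨i₀, hi₀⟩ := Function.ne_iff.mp ha
    -- the row through `i₀` determines every column coefficient `c j`
    refine ⟨d i₀ / a i₀, funext fun ⟨i, j⟩ => ?_⟩
    have hc_eq : c j = d i₀ * b j / a i₀ := by
      rw [eq_div_iff hi₀, ← hu, hu']
    simp only [Pi.smul_apply, smul_eq_mul, hu, hc_eq]
    field_simp
  · rw [Submodule.span_singleton_le_iff_mem]
    refine ⟨(mem_ker_kronecker_one_iff A _).mpr fun j => ?_,
      (mem_ker_one_kronecker_iff B _).mpr fun i => ?_⟩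
    · rw [hA, Submodule.mem_span_singleton]
      exact ⟨b j, funext fun i => mul_comm _ _⟩
    · rw [hB, Submodule.mem_span_singleton]
      exact ⟨a i, rfl⟩

theorem finrank_ker_transpose [Field K] (A : Matrix n n K) :
    finrank K (LinearMap.ker Aᵀ.mulVecLin) = finrank K (LinearMap.ker A.mulVecLin) := by
  have h := LinearMap.finrank_range_add_finrank_ker A.mulVecLin
  have hT := LinearMap.finrank_range_add_finrank_ker Aᵀ.mulVecLin
  have hrank : Aᵀ.rank = A.rank := rank_transpose A
  rw [rank, rank] at hrank
  omega

theorem finrank_range_sup_add_finrank_ker_transpose_inf [Field K] [Fintype k]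
    (A : Matrix m n K) (B : Matrix m k K) :
    finrank K ↥(LinearMap.range A.mulVecLin ⊔ LinearMap.range B.mulVecLin) +
      finrank K ↥(LinearMap.ker Aᵀ.mulVecLin ⊓ LinearMap.ker Bᵀ.mulVecLin) = Fintype.card m := by
  have hrange : LinearMap.range (fromCols A B).mulVecLin =
      LinearMap.range A.mulVecLin ⊔ LinearMap.range B.mulVecLin := by
    simp only [range_mulVecLin, ← Submodule.span_union]
    congr 1
    ext v
    simp only [col, transpose_fromCols, Set.mem_union]
    constructor
    · rintro ⟨i | i, rfl⟩
      exacts [Or.inl ⟨i, rfl⟩, Or.inr ⟨i, rfl⟩]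
    · rintro (⟨i, rfl⟩ | ⟨i, rfl⟩)
      exacts [⟨Sum.inl i, rfl⟩, ⟨Sum.inr i, rfl⟩]
  have hker : LinearMap.ker (fromCols A B)ᵀ.mulVecLin =
      LinearMap.ker Aᵀ.mulVecLin ⊓ LinearMap.ker Bᵀ.mulVecLin := by
    ext v
    simp [transpose_fromCols, ← Sum.elim_zero_zero, Sum.elim_eq_iff, mulVec_transpose]
  have hrank := rank_transpose (fromCols A B)
  rw [rank, rank, hrange] at hrank
  rw [← hrank, ← hker, LinearMap.finrank_range_add_finrank_ker, finrank_fintype_fun_eq_card]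

theorem finrank_ker_kronecker_one_inf_ker_one_kronecker [Field K] [DecidableEq m]
    [DecidableEq n] {A : Matrix l m K} {B : Matrix k n K}
    (hA : finrank K (LinearMap.ker A.mulVecLin) = 1)
    (hB : finrank K (LinearMap.ker B.mulVecLin) = 1) :
    finrank K ↥(LinearMap.ker (A ⊗ₖ (1 : Matrix n n K)).mulVecLin ⊓
        LinearMap.ker ((1 : Matrix m m K) ⊗ₖ B).mulVecLin) = 1 := by
  obtain ⟨a, ha, hA⟩ := Submodule.exists_eq_span_singleton_of_finrank_eq_one hA
  obtain ⟨b, hb, hB⟩ := Submodule.exists_eq_span_singleton_of_finrank_eq_one hB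
  obtain ⟨i, hi⟩ := Function.ne_iff.mp ha
  obtain ⟨j, hj⟩ := Function.ne_iff.mp hb
  rw [ker_kronecker_one_inf_ker_one_kronecker hA hB]
  exact finrank_span_singleton (Function.ne_iff.mpr ⟨(i, j), mul_ne_zero hi hj⟩)

end Matrix

/-- For nullspace consistent tensor product SBP operators in two dimensions,
`dim (ker curl) = dim (im grad) + 2`. -/
theorem dim_ker_curl_eq_dim_im_grad_add_two_2D (N₁ N₂ : ℕ) (hN₁ : 1 ≤ N₁) (hN₂ : 1 ≤ N₂)
    (Dx : Matrix (Fin N₁) (Fin N₁) ℝ) (Dy : Matrix (Fin N₂) (Fin N₂) ℝ)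
    (hDx : LinearMap.ker Dx.mulVecLin = Submodule.span ℝ {(fun _ => 1 : Fin N₁ → ℝ)})
    (hDy : LinearMap.ker Dy.mulVecLin = Submodule.span ℝ {(fun _ => 1 : Fin N₂ → ℝ)})
    (D₁ D₂ : Matrix (Fin N₁ × Fin N₂) (Fin N₁ × Fin N₂) ℝ)
    (hD₁ : D₁ = Dx ⊗ₖ (1 : Matrix (Fin N₂) (Fin N₂) ℝ))
    (hD₂ : D₂ = (1 : Matrix (Fin N₁) (Fin N₁) ℝ) ⊗ₖ Dy)
    (grad : (Fin N₁ × Fin N₂ → ℝ) →ₗ[ℝ] (Fin N₁ × Fin N₂ → ℝ) × (Fin N₁ × Fin N₂ → ℝ))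
    (hgrad : grad = LinearMap.prod D₁.mulVecLin D₂.mulVecLin)
    (curl : (Fin N₁ × Fin N₂ → ℝ) × (Fin N₁ × Fin N₂ → ℝ) →ₗ[ℝ] (Fin N₁ × Fin N₂ → ℝ))
    (hcurl : curl = D₁.mulVecLin ∘ₗ LinearMap.snd ℝ _ _ - D₂.mulVecLin ∘ₗ LinearMap.fst ℝ _ _) :
    Module.finrank ℝ ↥(LinearMap.ker curl) =
      Module.finrank ℝ ↥(LinearMap.range grad) + 2 := by
  have hkerDx : finrank ℝ (LinearMap.ker Dx.mulVecLin) = 1 := by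
    rw [hDx]
    exact finrank_span_singleton (Function.ne_iff.mpr ⟨⟨0, hN₁⟩, one_ne_zero⟩)
  have hkerDy : finrank ℝ (LinearMap.ker Dy.mulVecLin) = 1 := by
    rw [hDy]
    exact finrank_span_singleton (Function.ne_iff.mpr ⟨⟨0, hN₂⟩, one_ne_zero⟩)
  have hker_grad : finrank ℝ (LinearMap.ker grad) = 1 := by
    rw [hgrad, LinearMap.ker_prod, hD₁, hD₂]
    exact finrank_ker_kronecker_one_inf_ker_one_kronecker hkerDx hkerDy
  have hker_transpose :
      finrank ℝ ↥(LinearMap.ker D₁ᵀ.mulVecLin ⊓ LinearMap.ker D₂ᵀ.mulVecLin) = 1 := by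
    subst hD₁ hD₂
    rw [← kroneckerMap_transpose, ← kroneckerMap_transpose, transpose_one, transpose_one]
    exact finrank_ker_kronecker_one_inf_ker_one_kronecker
      ((finrank_ker_transpose Dx).trans hkerDx) ((finrank_ker_transpose Dy).trans hkerDy)
  have hrange_curl :
      LinearMap.range curl = LinearMap.range D₁.mulVecLin ⊔ LinearMap.range D₂.mulVecLin := by
    rw [hcurl, LinearMap.range_comp_snd_sub_comp_fst]
  have hsup := finrank_range_sup_add_finrank_ker_transpose_inf D₁ D₂
  rw [hker_transpose, ← hrange_curl] at hsup
  have hgrad_rank := LinearMap.finrank_range_add_finrank_ker grad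
  have hcurl_rank := LinearMap.finrank_range_add_finrank_ker curl
  rw [finrank_prod, finrank_fintype_fun_eq_card] at hcurl_rank
  rw [hker_grad, finrank_fintype_fun_eq_card] at hgrad_rank
  omega
end
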